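/- Let q(θ) = exp(2Kr cos θ)/(2π I₀(2Kr)) on the circle S = ℝ/2πℤ, where r > 0 satisfies r = I₁(2Kr)/I₀(2Kr). Then q is a probability density on S (i.e. ∫_S q = 1, q > 0) and is a stationary solution of the PDE ∂_t p = (1/2)∂²_θ p − ∂_θ((J*p)·p) with J(θ) = −K sin θ, i.e. (1/2) q'' = ∂_θ((J*q)·q). -/

import Mathlib

open Real MeasureTheory

/-- Modified Bessel function of the first kind of order `j` (integral formula). -/
noncomputable def besselI (j : ℕ) (x : ℝ) : ℝ :=
  (1 / (2 * π)) * ∫ θ in (0:ℝ)..(2 * π), (Real.cos θ) ^ j * Real.exp (x * Real.cos θ)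

/-- The stationary density `q(θ) = exp(2Kr cos θ)/(2π I₀(2Kr))`. -/
noncomputable def q (K r θ : ℝ) : ℝ :=
  Real.exp (2 * K * r * Real.cos θ) / (2 * π * besselI 0 (2 * K * r))

/-- Convolution `(J * p)(θ) = ∫_S J(θ - θ') p(θ') dθ'` with `J(θ) = -K sin θ`. -/
noncomputable def Jconv (K : ℝ) (p : ℝ → ℝ) (θ : ℝ) : ℝ :=
  ∫ θ' in (0:ℝ)..(2 * π), (-K * Real.sin (θ - θ')) * p θ'

/-!
Writing `a = 2Kr`, the kernel `J(θ - θ') = -K (sin θ cos θ' - cos θ sin θ')` only sees the first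
trigonometric moments of `q`: the sine moment vanishes by symmetry and the cosine moment is
`I₁(a)/I₀(a)`, which equals `r` by the fixed point equation. Hence `J * q = -K r sin θ`, so the
flux `(J * q) q` is exactly `q'/2` because `q' = -a sin θ q`, and differentiating once more gives
the stationarity equation.
-/

lemma integral_cos_pow_mul_exp (j : ℕ) (x : ℝ) :
    ∫ θ in (0:ℝ)..(2 * π), cos θ ^ j * exp (x * cos θ) = 2 * π * besselI j x := by
  rw [besselI, ← mul_assoc, mul_one_div_cancel (by positivity), one_mul]

lemma besselI_zero_pos (x : ℝ) : 0 < besselI 0 x := by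
  refine mul_pos (by positivity) (intervalIntegral.intervalIntegral_pos_of_pos_on ?_ ?_ ?_)
  · exact Continuous.intervalIntegrable (by fun_prop) _ _
  · intro θ _
    positivity
  · positivity

lemma integral_sin_mul_exp_mul_cos (a : ℝ) :
    ∫ θ in (0:ℝ)..(2 * π), sin θ * exp (a * cos θ) = 0 := by
  have hsubst : ∫ θ in (0:ℝ)..(2 * π), ((fun u => -exp (a * u)) ∘ cos) θ * -sin θ
      = ∫ u in cos 0..cos (2 * π), -exp (a * u) :=
    intervalIntegral.integral_comp_mul_deriv (fun θ _ => hasDerivAt_cos θ)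
      (by fun_prop) (by fun_prop)
  rw [cos_zero, cos_two_pi, intervalIntegral.integral_same] at hsubst
  simpa only [Function.comp_apply, neg_mul_neg, mul_comm] using hsubst

lemma continuous_q (K r : ℝ) : Continuous (q K r) := by
  unfold q
  fun_prop

lemma q_pos (K r θ : ℝ) : 0 < q K r θ :=
  div_pos (exp_pos _) (mul_pos (by positivity) (besselI_zero_pos _))

lemma integral_q (K r : ℝ) : ∫ θ in (0:ℝ)..(2 * π), q K r θ = 1 := by
  have h := integral_cos_pow_mul_exp 0 (2 * K * r)
  simp only [pow_zero, one_mul] at h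
  simp only [q, intervalIntegral.integral_div, h]
  exact div_self (mul_pos (by positivity) (besselI_zero_pos _)).ne'

lemma integral_cos_mul_q (K r : ℝ) :
    ∫ θ in (0:ℝ)..(2 * π), cos θ * q K r θ
      = besselI 1 (2 * K * r) / besselI 0 (2 * K * r) := by
  have h := integral_cos_pow_mul_exp 1 (2 * K * r)
  simp only [pow_one] at h
  simp only [q, mul_div_assoc', intervalIntegral.integral_div, h]
  exact mul_div_mul_left _ _ (by positivity)

lemma integral_sin_mul_q (K r : ℝ) : ∫ θ in (0:ℝ)..(2 * π), sin θ * q K r θ = 0 := by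
  simp only [q, mul_div_assoc', intervalIntegral.integral_div, integral_sin_mul_exp_mul_cos,
    zero_div]

lemma Jconv_eq_of_continuous (K : ℝ) {p : ℝ → ℝ} (hp : Continuous p) (θ : ℝ) :
    Jconv K p θ = -K * sin θ * (∫ t in (0:ℝ)..(2 * π), cos t * p t)
      + K * cos θ * ∫ t in (0:ℝ)..(2 * π), sin t * p t := by
  have hsplit : ∀ t, -K * sin (θ - t) * p t
      = -K * sin θ * (cos t * p t) + K * cos θ * (sin t * p t) := by
    intro t
    rw [sin_sub]
    ring
  simp only [Jconv, hsplit]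
  rw [intervalIntegral.integral_add (Continuous.intervalIntegrable (by fun_prop) _ _)
      (Continuous.intervalIntegrable (by fun_prop) _ _),
    intervalIntegral.integral_const_mul, intervalIntegral.integral_const_mul]

lemma Jconv_q (K r θ : ℝ) :
    Jconv K (q K r) θ = -K * sin θ * (besselI 1 (2 * K * r) / besselI 0 (2 * K * r)) := by
  rw [Jconv_eq_of_continuous K (continuous_q K r), integral_cos_mul_q, integral_sin_mul_q,
    mul_zero, add_zero]

lemma hasDerivAt_q (K r θ : ℝ) :
    HasDerivAt (q K r) (-(2 * K * r) * sin θ * q K r θ) θ := by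
  have h := (((hasDerivAt_cos θ).const_mul (2 * K * r)).exp).div_const
    (2 * π * besselI 0 (2 * K * r))
  refine h.congr_deriv ?_
  unfold q
  ring

lemma Jconv_q_mul_q_eq_half_deriv_q {K r : ℝ}
    (hfix : r = besselI 1 (2 * K * r) / besselI 0 (2 * K * r)) :
    (fun θ => Jconv K (q K r) θ * q K r θ) = fun θ => 1 / 2 * deriv (q K r) θ := by
  funext θ
  rw [Jconv_q, ← hfix, (hasDerivAt_q K r θ).deriv]
  ring

theorem q_is_stationary_probability_density_general (K r : ℝ)
    (hfix : r = besselI 1 (2 * K * r) / besselI 0 (2 * K * r)) :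
    (∀ θ, 0 < q K r θ) ∧
    (∫ θ in (0:ℝ)..(2 * π), q K r θ) = 1 ∧
    (∀ θ, (1 / 2) * deriv (deriv (q K r)) θ
        = deriv (fun θ' => Jconv K (q K r) θ' * q K r θ') θ) := by
  refine ⟨q_pos K r, integral_q K r, fun θ => ?_⟩
  rw [Jconv_q_mul_q_eq_half_deriv_q hfix, deriv_const_mul_field']

/-- If `K > 1` and `r > 0` satisfies `r = I₁(2Kr)/I₀(2Kr)`, then `q` is a positive
probability density on the circle and a stationary solution of the Fokker–Planck
equation: `(1/2) q'' = ∂_θ((J*q)·q)`. -/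
theorem q_is_stationary_probability_density (K r : ℝ) (hK : 1 < K) (hr : 0 < r)
    (hfix : r = besselI 1 (2 * K * r) / besselI 0 (2 * K * r)) :
    (∀ θ, 0 < q K r θ) ∧
    (∫ θ in (0:ℝ)..(2 * π), q K r θ) = 1 ∧
    (∀ θ, (1 / 2) * deriv (deriv (q K r)) θ
        = deriv (fun θ' => Jconv K (q K r) θ' * q K r θ') θ) :=
  q_is_stationary_probability_density_general K r hfix
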